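/- arXiv:hep-th/0008163 — 3 statements merged into one kernel-verified Lean document; each statement's English description precedes it below -/
import Mathlib

section
/- Suppose p₁, p₂, p₃, p₄ are nonzero vectors in a vector space V with p₂, p₃, p₄ linearly independent and Σᵢ aᵢ pᵢ = 0 for some all-nonzero reals aᵢ. If w₁, w₂, w₃, w₄ ∈ V satisfy Σᵢ pᵢ ⊗ wᵢ = 0 (as a tensor in V ⊗ V), then there exists w ∈ V with wᵢ = aᵢ w for all i. -/
/-!
Write `w₁ = a₁ • w`. Eliminating `p₁` by the relation `Σ aᵢ pᵢ = 0` turns the hypothesis into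
`Σ_{j ≥ 2} f(pⱼ) • (wⱼ - aⱼ • w) = 0` for every functional `f`; evaluating at the functionals dual
to the independent vectors `p₂, p₃, p₄` isolates each coefficient `wⱼ - aⱼ • w`.
-/

open Module

section

variable {ι K V W : Type*} [Field K] [AddCommGroup V] [Module K V] [AddCommGroup W] [Module K W]
  {v : ι → V}

theorem LinearIndependent.exists_dual_apply_eq_ite [DecidableEq ι] (hv : LinearIndependent K v)
    (i : ι) : ∃ f : Dual K V, ∀ j, f (v j) = if j = i then 1 else 0 := by
  obtain ⟨f, hf⟩ := LinearMap.exists_extend (Finsupp.lapply i ∘ₗ hv.repr)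
  refine ⟨f, fun j => ?_⟩
  have hj := LinearMap.congr_fun hf ⟨v j, Submodule.subset_span ⟨j, rfl⟩⟩
  simp only [LinearMap.comp_apply, Submodule.subtype_apply, Finsupp.lapply_apply] at hj
  rw [hj, hv.repr_eq_single j _ rfl, Finsupp.single_apply]

theorem LinearIndependent.eq_zero_of_forall_dual_sum_smul_eq_zero [Fintype ι]
    (hv : LinearIndependent K v) {u : ι → W} (h : ∀ f : Dual K V, ∑ i, f (v i) • u i = 0) :
    u = 0 := by
  classical
  funext i
  obtain ⟨f, hf⟩ := hv.exists_dual_apply_eq_ite i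
  simpa [hf] using h f

end

theorem tensor_vanishing_implies_proportional_general
    {V : Type*} [AddCommGroup V] [Module ℝ V]
    (p₁ p₂ p₃ p₄ : V)
    (hind : LinearIndependent ℝ ![p₂, p₃, p₄])
    (a₁ a₂ a₃ a₄ : ℝ)
    (ha₁ : a₁ ≠ 0)
    (ha : a₁ • p₁ + a₂ • p₂ + a₃ • p₃ + a₄ • p₄ = 0)
    (w₁ w₂ w₃ w₄ : V)
    (hQ : ∀ f : V →ₗ[ℝ] ℝ, f p₁ • w₁ + f p₂ • w₂ + f p₃ • w₃ + f p₄ • w₄ = 0) :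
    ∃ w : V, w₁ = a₁ • w ∧ w₂ = a₂ • w ∧ w₃ = a₃ • w ∧ w₄ = a₄ • w := by
  obtain ⟨w, rfl⟩ : ∃ w, w₁ = a₁ • w := ⟨a₁⁻¹ • w₁, (smul_inv_smul₀ ha₁ w₁).symm⟩
  have hu : ![w₂ - a₂ • w, w₃ - a₃ • w, w₄ - a₄ • w] = 0 := by
    refine hind.eq_zero_of_forall_dual_sum_smul_eq_zero fun f => ?_
    have hf : a₁ * f p₁ + a₂ * f p₂ + a₃ * f p₃ + a₄ * f p₄ = 0 := by
      simpa using congr(f $ha)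
    simp only [Fin.sum_univ_three, Matrix.cons_val_zero, Matrix.cons_val_one, Matrix.cons_val_two,
      Matrix.tail_cons, Matrix.head_cons]
    linear_combination (norm := module) hQ f - hf • w
  have hw := congr_fun hu
  refine ⟨w, rfl, ?_, ?_, ?_⟩ <;> rw [← sub_eq_zero]
  exacts [hw 0, hw 1, hw 2]

theorem tensor_vanishing_implies_proportional
    {V : Type*} [AddCommGroup V] [Module ℝ V] [FiniteDimensional ℝ V]
    (p₁ p₂ p₃ p₄ : V)
    (hp₁ : p₁ ≠ 0) (hp₂ : p₂ ≠ 0) (hp₃ : p₃ ≠ 0) (hp₄ : p₄ ≠ 0)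
    (hind : LinearIndependent ℝ ![p₂, p₃, p₄])
    (a₁ a₂ a₃ a₄ : ℝ)
    (ha₁ : a₁ ≠ 0) (ha₂ : a₂ ≠ 0) (ha₃ : a₃ ≠ 0) (ha₄ : a₄ ≠ 0)
    (ha : a₁ • p₁ + a₂ • p₂ + a₃ • p₃ + a₄ • p₄ = 0)
    (w₁ w₂ w₃ w₄ : V)
    (hQ : ∀ f : V →ₗ[ℝ] ℝ, f p₁ • w₁ + f p₂ • w₂ + f p₃ • w₃ + f p₄ • w₄ = 0) :
    ∃ w : V, w₁ = a₁ • w ∧ w₂ = a₂ • w ∧ w₃ = a₃ • w ∧ w₄ = a₄ • w :=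
  tensor_vanishing_implies_proportional_general p₁ p₂ p₃ p₄ hind a₁ a₂ a₃ a₄ ha₁ ha w₁ w₂ w₃ w₄ hQ
end

section
/- Let p₁, p₂, p₃, p₄ be nonzero null vectors in four-dimensional Minkowski space, with p₁ not parallel to any of p₂, p₃, p₄. If dim span{p₂, p₃, p₄} = 2, then exactly one pair among {p₂, p₃, p₄} consists of parallel vectors, and there exists r ∈ V with ⟨p₁|r⟩ ≠ 0 and ⟨pᵢ|r⟩ = 0 for i = 2, 3, 4. -/
/-- The Minkowski bilinear form of signature (+,-,-,-) on ℝ⁴. -/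
def mink (p q : Fin 4 → ℝ) : ℝ :=
  p 0 * q 0 - p 1 * q 1 - p 2 * q 2 - p 3 * q 3

/-- A vector is null if it has zero Minkowski norm. -/
def IsNull (p : Fin 4 → ℝ) : Prop := mink p p = 0

/-- Two vectors are parallel if one is a scalar multiple of the other. -/
def Par (p q : Fin 4 → ℝ) : Prop := ∃ c : ℝ, q = c • p ∨ p = c • q

/-- A future null vector (time orientation: positive 0th component). -/
def FutureNull (p : Fin 4 → ℝ) : Prop := p ≠ 0 ∧ IsNull p ∧ 0 < p 0

/-!
Two null vectors are orthogonal only if they are parallel: `q 0 • p - p 0 • q` is null with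
vanishing time component, hence zero. Consequently three pairwise non-parallel null vectors
are independent, since pairing a relation among them with each vector gives a nondegenerate
`3 × 3` system. A span of dimension two therefore contains a parallel pair, and cannot contain
two, which would put all three vectors on one line. Finally, for null `p₁, p, q` with
`⟨p₁|p⟩ = a` and `⟨p₁|q⟩ = b`, the vector `⟨p|q⟩ p₁ - b p - a q` is orthogonal to `p` and `q`
but pairs with `p₁` to `-2ab`.
-/

section Minkowski

variable {p q s : Fin 4 → ℝ}

lemma mink_comm (p q : Fin 4 → ℝ) : mink p q = mink q p := by
  unfold mink; ring

@[simp]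
lemma mink_zero_right (p : Fin 4 → ℝ) : mink p 0 = 0 := by
  simp [mink]

@[simp]
lemma mink_add_right (p q s : Fin 4 → ℝ) : mink p (q + s) = mink p q + mink p s := by
  simp only [mink, Pi.add_apply]; ring

@[simp]
lemma mink_sub_right (p q s : Fin 4 → ℝ) : mink p (q - s) = mink p q - mink p s := by
  simp only [mink, Pi.sub_apply]; ring

@[simp]
lemma mink_smul_right (p q : Fin 4 → ℝ) (c : ℝ) : mink p (c • q) = c * mink p q := by
  simp only [mink, Pi.smul_apply, smul_eq_mul]; ring

@[simp]
lemma mink_smul_left (p q : Fin 4 → ℝ) (c : ℝ) : mink (c • p) q = c * mink p q := by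
  simp only [mink, Pi.smul_apply, smul_eq_mul]; ring

lemma eq_zero_of_isNull_of_apply_zero_eq_zero (hp : IsNull p) (h0 : p 0 = 0) : p = 0 := by
  have hp' : p 0 * p 0 - p 1 * p 1 - p 2 * p 2 - p 3 * p 3 = 0 := hp
  rw [h0] at hp'
  funext i
  fin_cases i
  · exact h0
  all_goals
    simp only [Fin.reduceFinMk, Fin.isValue, Pi.zero_apply]
    nlinarith [sq_nonneg (p 1), sq_nonneg (p 2), sq_nonneg (p 3)]

lemma par_of_mink_eq_zero (hp : IsNull p) (hq : IsNull q) (h : mink p q = 0) : Par p q := by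
  set w := q 0 • p - p 0 • q with hw
  have hw_null : IsNull w := by
    have hp' : mink p p = 0 := hp
    have hq' : mink q q = 0 := hq
    have expand :
        mink w w = q 0 ^ 2 * mink p p - 2 * p 0 * q 0 * mink p q + p 0 ^ 2 * mink q q := by
      simp only [mink, hw, Pi.sub_apply, Pi.smul_apply, smul_eq_mul]; ring
    rw [IsNull, expand, hp', hq', h]; ring
  have hw0 : w 0 = 0 := by simp [hw, mul_comm]
  have key : q 0 • p = p 0 • q :=
    sub_eq_zero.mp (eq_zero_of_isNull_of_apply_zero_eq_zero hw_null hw0)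
  by_cases hp0 : p 0 = 0
  · exact ⟨0, Or.inr (by rw [zero_smul]; exact eq_zero_of_isNull_of_apply_zero_eq_zero hp hp0)⟩
  · refine ⟨(p 0)⁻¹ * q 0, Or.inl ?_⟩
    rw [mul_smul, key, smul_smul, inv_mul_cancel₀ hp0, one_smul]

lemma mink_ne_zero_of_not_par (hp : IsNull p) (hq : IsNull q) (h : ¬ Par p q) : mink p q ≠ 0 :=
  fun h0 => h (par_of_mink_eq_zero hp hq h0)

lemma right_ne_zero_of_not_par (h : ¬ Par p q) : q ≠ 0 := by
  rintro rfl
  exact h ⟨0, Or.inl (zero_smul ℝ p).symm⟩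

lemma Par.symm (h : Par p q) : Par q p := by
  obtain ⟨c, hc⟩ := h
  exact ⟨c, hc.symm⟩

lemma Par.mem_span_singleton (hp : p ≠ 0) (h : Par p q) : q ∈ Submodule.span ℝ {p} := by
  obtain ⟨c, hc | hc⟩ := h
  · exact Submodule.mem_span_singleton.mpr ⟨c, hc.symm⟩
  · have hc0 : c ≠ 0 := by
      rintro rfl
      exact hp (by simpa using hc)
    exact Submodule.mem_span_singleton.mpr
      ⟨c⁻¹, by rw [hc, smul_smul, inv_mul_cancel₀ hc0, one_smul]⟩

lemma Par.mink_eq_zero (hp : p ≠ 0) (h : Par p q) (hs : mink p s = 0) : mink q s = 0 := by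
  obtain ⟨c, rfl⟩ := Submodule.mem_span_singleton.mp (h.mem_span_singleton hp)
  rw [mink_smul_left, hs, mul_zero]

lemma linearIndependent_of_not_par (hp : IsNull p) (hq : IsNull q) (hs : IsNull s)
    (hpq : ¬ Par p q) (hps : ¬ Par p s) (hqs : ¬ Par q s) :
    LinearIndependent ℝ ![p, q, s] := by
  have hpq₀ := mink_ne_zero_of_not_par hp hq hpq
  have hps₀ := mink_ne_zero_of_not_par hp hs hps
  have hqs₀ := mink_ne_zero_of_not_par hq hs hqs
  rw [Fintype.linearIndependent_iff]
  intro g hg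
  simp only [Fin.sum_univ_three, Matrix.cons_val_zero, Matrix.cons_val_one,
    Matrix.cons_val_two, Matrix.head_cons, Matrix.tail_cons] at hg
  have pair (x : Fin 4 → ℝ) :
      g 0 * mink x p + g 1 * mink x q + g 2 * mink x s = 0 := by
    simpa using congrArg (mink x) hg
  have hgp := pair p
  have hgq := pair q
  have hgs := pair s
  rw [show mink p p = 0 from hp] at hgp
  rw [show mink q q = 0 from hq, mink_comm q p] at hgq
  rw [show mink s s = 0 from hs, mink_comm s p, mink_comm s q] at hgs
  have h2 : g 2 = 0 := by
    have : g 2 * (2 * mink p s * mink q s) = 0 := by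
      linear_combination mink p s * hgq + mink q s * hgp - mink p q * hgs
    simpa [hps₀, hqs₀] using this
  have h1 : g 1 = 0 := by simpa [h2, hpq₀] using hgp
  have h0 : g 0 = 0 := by simpa [h2, hpq₀] using hgq
  intro i
  fin_cases i <;> assumption

lemma finrank_span_eq_three_of_not_par (hp : IsNull p) (hq : IsNull q) (hs : IsNull s)
    (hpq : ¬ Par p q) (hps : ¬ Par p s) (hqs : ¬ Par q s) :
    Module.finrank ℝ (Submodule.span ℝ ({p, q, s} : Set (Fin 4 → ℝ))) = 3 := by
  have := finrank_span_eq_card (linearIndependent_of_not_par hp hq hs hpq hps hqs)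
  rwa [Matrix.range_cons, Matrix.range_cons_cons_empty, Set.singleton_union] at this

lemma finrank_span_le_one_of_par (hp : p ≠ 0) (hq : Par p q) (hs : Par p s) :
    Module.finrank ℝ (Submodule.span ℝ ({p, q, s} : Set (Fin 4 → ℝ))) ≤ 1 := by
  have hle : Submodule.span ℝ {p, q, s} ≤ Submodule.span ℝ {p} :=
    Submodule.span_le.mpr <| Set.insert_subset (Submodule.mem_span_singleton_self p) <|
      Set.insert_subset (hq.mem_span_singleton hp) <|
        Set.singleton_subset_iff.mpr (hs.mem_span_singleton hp)
  exact (Submodule.finrank_mono hle).trans (finrank_span_singleton hp).le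

lemma par_exactly_one_of_finrank_span_eq_two (hp : p ≠ 0) (hq : q ≠ 0) (hs : s ≠ 0)
    (hnp : IsNull p) (hnq : IsNull q) (hns : IsNull s)
    (hdim : Module.finrank ℝ (Submodule.span ℝ ({p, q, s} : Set (Fin 4 → ℝ))) = 2) :
    (Par p q ∧ ¬ Par p s ∧ ¬ Par q s) ∨
    (Par p s ∧ ¬ Par p q ∧ ¬ Par q s) ∨
    (Par q s ∧ ¬ Par p q ∧ ¬ Par p s) := by
  have some_par : Par p q ∨ Par p s ∨ Par q s := by
    by_contra! h
    have := finrank_span_eq_three_of_not_par hnp hnq hns h.1 h.2.1 h.2.2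
    omega
  have not_pq_ps (hpq : Par p q) (hps : Par p s) : False := by
    have := finrank_span_le_one_of_par hp hpq hps
    omega
  have not_pq_qs (hpq : Par p q) (hqs : Par q s) : False := by
    have := finrank_span_le_one_of_par hq hpq.symm hqs
    rw [Set.insert_comm] at this
    omega
  have not_ps_qs (hps : Par p s) (hqs : Par q s) : False := by
    have := finrank_span_le_one_of_par hs hps.symm hqs.symm
    rw [Set.insert_comm s p, Set.pair_comm s q] at this
    omega
  tauto

lemma exists_mink_ne_zero_and_mink_eq_zero {p₁ : Fin 4 → ℝ} (hp₁ : IsNull p₁) (hp : IsNull p)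
    (hq : IsNull q) (ha : mink p₁ p ≠ 0) (hb : mink p₁ q ≠ 0) :
    ∃ r, mink p₁ r ≠ 0 ∧ mink p r = 0 ∧ mink q r = 0 := by
  have hp₁' : mink p₁ p₁ = 0 := hp₁
  have hp' : mink p p = 0 := hp
  have hq' : mink q q = 0 := hq
  refine ⟨mink p q • p₁ - mink p₁ q • p - mink p₁ p • q, ?_, ?_, ?_⟩
  · have : mink p₁ (mink p q • p₁ - mink p₁ q • p - mink p₁ p • q)
        = -(2 * mink p₁ p * mink p₁ q) := by
      simp only [mink_sub_right, mink_smul_right, hp₁']; ring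
    rw [this]
    exact neg_ne_zero.mpr (mul_ne_zero (mul_ne_zero two_ne_zero ha) hb)
  · simp only [mink_sub_right, mink_smul_right, hp', mink_comm p p₁]; ring
  · simp only [mink_sub_right, mink_smul_right, hq', mink_comm q p₁, mink_comm q p]; ring

end Minkowski

theorem case_b_general
    (p₁ p₂ p₃ p₄ : Fin 4 → ℝ)
    (hn₁ : IsNull p₁) (hn₂ : IsNull p₂) (hn₃ : IsNull p₃) (hn₄ : IsNull p₄)
    (h₁₂ : ¬ Par p₁ p₂) (h₁₃ : ¬ Par p₁ p₃) (h₁₄ : ¬ Par p₁ p₄)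
    (hdim : Module.finrank ℝ (Submodule.span ℝ ({p₂, p₃, p₄} : Set (Fin 4 → ℝ))) = 2) :
    ((Par p₂ p₃ ∧ ¬ Par p₂ p₄ ∧ ¬ Par p₃ p₄) ∨
     (Par p₂ p₄ ∧ ¬ Par p₂ p₃ ∧ ¬ Par p₃ p₄) ∨
     (Par p₃ p₄ ∧ ¬ Par p₂ p₃ ∧ ¬ Par p₂ p₄)) ∧
    ∃ r : Fin 4 → ℝ,
      mink p₁ r ≠ 0 ∧ mink p₂ r = 0 ∧ mink p₃ r = 0 ∧ mink p₄ r = 0 := by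
  have h₂ := right_ne_zero_of_not_par h₁₂
  have h₃ := right_ne_zero_of_not_par h₁₃
  have h₄ := right_ne_zero_of_not_par h₁₄
  have hpair := par_exactly_one_of_finrank_span_eq_two h₂ h₃ h₄ hn₂ hn₃ hn₄ hdim
  refine ⟨hpair, ?_⟩
  have a₂ := mink_ne_zero_of_not_par hn₁ hn₂ h₁₂
  have a₃ := mink_ne_zero_of_not_par hn₁ hn₃ h₁₃
  have a₄ := mink_ne_zero_of_not_par hn₁ hn₄ h₁₄
  rcases hpair with ⟨h23, -, -⟩ | ⟨h24, -, -⟩ | ⟨h34, -, -⟩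
  · obtain ⟨r, hr₁, hr₂, hr₄⟩ := exists_mink_ne_zero_and_mink_eq_zero hn₁ hn₂ hn₄ a₂ a₄
    exact ⟨r, hr₁, hr₂, h23.mink_eq_zero h₂ hr₂, hr₄⟩
  · obtain ⟨r, hr₁, hr₂, hr₃⟩ := exists_mink_ne_zero_and_mink_eq_zero hn₁ hn₂ hn₃ a₂ a₃
    exact ⟨r, hr₁, hr₂, hr₃, h24.mink_eq_zero h₂ hr₂⟩
  · obtain ⟨r, hr₁, hr₂, hr₃⟩ := exists_mink_ne_zero_and_mink_eq_zero hn₁ hn₂ hn₃ a₂ a₃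
    exact ⟨r, hr₁, hr₂, hr₃, h34.mink_eq_zero h₃ hr₃⟩

theorem case_b
    (p₁ p₂ p₃ p₄ : Fin 4 → ℝ)
    (h₁ : p₁ ≠ 0) (h₂ : p₂ ≠ 0) (h₃ : p₃ ≠ 0) (h₄ : p₄ ≠ 0)
    (hn₁ : IsNull p₁) (hn₂ : IsNull p₂) (hn₃ : IsNull p₃) (hn₄ : IsNull p₄)
    (h₁₂ : ¬ Par p₁ p₂) (h₁₃ : ¬ Par p₁ p₃) (h₁₄ : ¬ Par p₁ p₄)
    (hdim : Module.finrank ℝ (Submodule.span ℝ ({p₂, p₃, p₄} : Set (Fin 4 → ℝ))) = 2) :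
    ((Par p₂ p₃ ∧ ¬ Par p₂ p₄ ∧ ¬ Par p₃ p₄) ∨
     (Par p₂ p₄ ∧ ¬ Par p₂ p₃ ∧ ¬ Par p₃ p₄) ∨
     (Par p₃ p₄ ∧ ¬ Par p₂ p₃ ∧ ¬ Par p₂ p₄)) ∧
    ∃ r : Fin 4 → ℝ,
      mink p₁ r ≠ 0 ∧ mink p₂ r = 0 ∧ mink p₃ r = 0 ∧ mink p₄ r = 0 :=
  case_b_general p₁ p₂ p₃ p₄ hn₁ hn₂ hn₃ hn₄ h₁₂ h₁₃ h₁₄ hdim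
end

section
/- Let p₁, p₂, p₃, p₄ be nonzero null vectors in 4-dimensional Minkowski space V with p₁ not parallel to p₂, p₃, p₄, and suppose dim span{p₂, p₃, p₄} = 3 and dim span{p₁, p₂, p₃, p₄} = 3. Then there exist reals a₁, a₂, a₃, a₄, all nonzero, with a₁p₁ + a₂p₂ + a₃p₃ + a₄p₄ = 0. -/
lemma null_ne_zero_time {p : Fin 4 → ℝ} (hn : IsNull p) (h : p ≠ 0) : p 0 ≠ 0 := by
  intro h0
  apply h
  unfold IsNull mink at hn
  rw [h0] at hn
  funext i
  fin_cases i <;> simp <;> nlinarith [sq_nonneg (p 1), sq_nonneg (p 2), sq_nonneg (p 3)]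

lemma null_orth_parallel {p q : Fin 4 → ℝ} (hp : p ≠ 0) (hnp : IsNull p) (hnq : IsNull q)
    (horth : mink p q = 0) : ∃ c : ℝ, q = c • p := by
  have h0 : p 0 ≠ 0 := null_ne_zero_time hnp hp
  unfold IsNull mink at hnp hnq
  unfold mink at horth
  have key : (p 1 * q 2 - p 2 * q 1)^2 + (p 1 * q 3 - p 3 * q 1)^2 + (p 2 * q 3 - p 3 * q 2)^2 = 0 := by
    linear_combination (-(q 0 * q 0)) * hnp - (p 1 * p 1 + p 2 * p 2 + p 3 * p 3) * hnq +
      (p 0 * q 0 + p 1 * q 1 + p 2 * q 2 + p 3 * q 3) * horth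
  have m12 : p 1 * q 2 - p 2 * q 1 = 0 := by
    nlinarith [key, sq_nonneg (p 1 * q 2 - p 2 * q 1), sq_nonneg (p 1 * q 3 - p 3 * q 1), sq_nonneg (p 2 * q 3 - p 3 * q 2)]
  have m13 : p 1 * q 3 - p 3 * q 1 = 0 := by
    nlinarith [key, sq_nonneg (p 1 * q 3 - p 3 * q 1), sq_nonneg (p 1 * q 2 - p 2 * q 1), sq_nonneg (p 2 * q 3 - p 3 * q 2)]
  have m23 : p 2 * q 3 - p 3 * q 2 = 0 := by
    nlinarith [key, sq_nonneg (p 2 * q 3 - p 3 * q 2), sq_nonneg (p 1 * q 2 - p 2 * q 1), sq_nonneg (p 1 * q 3 - p 3 * q 1)]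
  have e1 : p 0 * (p 0 * q 1 - q 0 * p 1) = 0 := by
    linear_combination q 1 * hnp - p 1 * horth - p 2 * m12 - p 3 * m13
  have e2 : p 0 * (p 0 * q 2 - q 0 * p 2) = 0 := by
    linear_combination q 2 * hnp - p 2 * horth + p 1 * m12 - p 3 * m23
  have e3 : p 0 * (p 0 * q 3 - q 0 * p 3) = 0 := by
    linear_combination q 3 * hnp - p 3 * horth + p 1 * m13 + p 2 * m23
  have f1 := (mul_eq_zero.mp e1).resolve_left h0
  have f2 := (mul_eq_zero.mp e2).resolve_left h0
  have f3 := (mul_eq_zero.mp e3).resolve_left h0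
  refine ⟨q 0 / p 0, ?_⟩
  funext i
  fin_cases i <;> simp <;> field_simp <;> linarith

open Module Submodule in
lemma span_three_le_two (x y : Fin 4 → ℝ) (c : ℝ) :
    Module.finrank ℝ (span ℝ ({x, y, c • y} : Set (Fin 4 → ℝ))) ≤ 2 := by
  have hle : span ℝ ({x, y, c • y} : Set (Fin 4 → ℝ)) ≤ span ℝ ({x, y} : Set (Fin 4 → ℝ)) := by
    rw [span_le]
    rintro v (rfl | rfl | rfl)
    · exact subset_span (by simp)
    · exact subset_span (by simp)
    · exact smul_mem _ c (subset_span (by simp))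
  refine (Submodule.finrank_mono hle).trans ?_
  refine (finrank_span_le_card _).trans ?_
  simp [Set.toFinset_insert]
  exact Finset.card_insert_le _ _ |>.trans (by simp)

lemma mink_comb {u v w : Fin 4 → ℝ} {a b : ℝ} (h : u = a • v + b • w)
    (hu : IsNull u) (hv : IsNull v) (hw : IsNull w) : 2 * a * b * mink v w = 0 := by
  subst h
  unfold IsNull mink at hu hv hw
  unfold mink
  simp only [Pi.add_apply, Pi.smul_apply, smul_eq_mul] at hu
  linear_combination hu - a ^ 2 * hv - b ^ 2 * hw

theorem case_d_coefficients
    (p₁ p₂ p₃ p₄ : Fin 4 → ℝ)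
    (h₁ : p₁ ≠ 0) (h₂ : p₂ ≠ 0) (h₃ : p₃ ≠ 0) (h₄ : p₄ ≠ 0)
    (hn₁ : IsNull p₁) (hn₂ : IsNull p₂) (hn₃ : IsNull p₃) (hn₄ : IsNull p₄)
    (h₁₂ : ¬ Par p₁ p₂) (h₁₃ : ¬ Par p₁ p₃) (h₁₄ : ¬ Par p₁ p₄)
    (hdim3 : Module.finrank ℝ (Submodule.span ℝ ({p₂, p₃, p₄} : Set (Fin 4 → ℝ))) = 3)
    (hdim4 : Module.finrank ℝ (Submodule.span ℝ ({p₁, p₂, p₃, p₄} : Set (Fin 4 → ℝ))) = 3) :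
    ∃ a₁ a₂ a₃ a₄ : ℝ, a₁ ≠ 0 ∧ a₂ ≠ 0 ∧ a₃ ≠ 0 ∧ a₄ ≠ 0 ∧
      a₁ • p₁ + a₂ • p₂ + a₃ • p₃ + a₄ • p₄ = 0 := by
  -- p₁ lies in the span of {p₂, p₃, p₄}
  have hle : Submodule.span ℝ ({p₂, p₃, p₄} : Set (Fin 4 → ℝ)) ≤
      Submodule.span ℝ ({p₁, p₂, p₃, p₄} : Set (Fin 4 → ℝ)) :=
    Submodule.span_mono (Set.subset_insert _ _)
  have heq := Submodule.eq_of_le_of_finrank_le hle (by rw [hdim3, hdim4])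
  have hmem : p₁ ∈ Submodule.span ℝ ({p₂, p₃, p₄} : Set (Fin 4 → ℝ)) := by
    rw [heq]; exact Submodule.subset_span (by simp)
  rw [show ({p₂, p₃, p₄} : Set (Fin 4 → ℝ)) = insert p₂ {p₃, p₄} from rfl,
    Submodule.mem_span_insert] at hmem
  obtain ⟨b₂, z, hz, hp⟩ := hmem
  rw [show ({p₃, p₄} : Set (Fin 4 → ℝ)) = insert p₃ {p₄} from rfl,
    Submodule.mem_span_insert] at hz
  obtain ⟨b₃, w, hw, hzz⟩ := hz
  rw [Submodule.mem_span_singleton] at hw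
  obtain ⟨b₄, hww⟩ := hw
  have hp₁ : p₁ = b₂ • p₂ + (b₃ • p₃ + b₄ • p₄) := by rw [hp, hzz, ← hww]
  clear hp hzz hww heq hle
  -- b₂ ≠ 0
  have hb₂ : b₂ ≠ 0 := by
    intro hb; subst hb
    rw [zero_smul, zero_add] at hp₁
    by_cases hb₃ : b₃ = 0
    · subst hb₃; rw [zero_smul, zero_add] at hp₁
      exact h₁₄ ⟨b₄, Or.inr hp₁⟩
    by_cases hb₄ : b₄ = 0
    · subst hb₄; rw [zero_smul, add_zero] at hp₁
      exact h₁₃ ⟨b₃, Or.inr hp₁⟩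
    have hm := mink_comb hp₁ hn₁ hn₃ hn₄
    have hm0 : mink p₃ p₄ = 0 :=
      (mul_eq_zero.mp hm).resolve_left (by simp [hb₃, hb₄])
    obtain ⟨c, hc⟩ := null_orth_parallel h₃ hn₃ hn₄ hm0
    rw [hc] at hdim3
    have := span_three_le_two p₂ p₃ c
    omega
  -- b₃ ≠ 0
  have hb₃ : b₃ ≠ 0 := by
    intro hb; subst hb
    rw [zero_smul, zero_add] at hp₁
    by_cases hb₄ : b₄ = 0
    · subst hb₄; rw [zero_smul, add_zero] at hp₁
      exact h₁₂ ⟨b₂, Or.inr hp₁⟩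
    have hm := mink_comb hp₁ hn₁ hn₂ hn₄
    have hm0 : mink p₂ p₄ = 0 :=
      (mul_eq_zero.mp hm).resolve_left (by simp [hb₂, hb₄])
    obtain ⟨c, hc⟩ := null_orth_parallel h₂ hn₂ hn₄ hm0
    rw [hc, Set.insert_comm] at hdim3
    have := span_three_le_two p₃ p₂ c
    omega
  -- b₄ ≠ 0
  have hb₄ : b₄ ≠ 0 := by
    intro hb; subst hb
    rw [zero_smul, add_zero] at hp₁
    have hm := mink_comb hp₁ hn₁ hn₂ hn₃
    have hm0 : mink p₂ p₃ = 0 :=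
      (mul_eq_zero.mp hm).resolve_left (by simp [hb₂, hb₃])
    obtain ⟨c, hc⟩ := null_orth_parallel h₂ hn₂ hn₃ hm0
    rw [hc, show ({p₂, c • p₂, p₄} : Set (Fin 4 → ℝ)) = {p₄, p₂, c • p₂} from by
      ext x; simp; tauto] at hdim3
    have := span_three_le_two p₄ p₂ c
    omega
  refine ⟨1, -b₂, -b₃, -b₄, one_ne_zero, neg_ne_zero.mpr hb₂, neg_ne_zero.mpr hb₃,
    neg_ne_zero.mpr hb₄, ?_⟩
  rw [hp₁]
  module
end
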